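/- Let m ≥ 2, n ≥ 1, let A be a real m×m matrix (not necessarily symmetric) with a_{ij} ≥ 0 for i ≠ j, zero row sums, and irreducible; let ε > 0, c > 0, and let Ã be the pinned matrix (ã_{11} = a_{11} − ε, ã_{ij} = a_{ij} otherwise). Let ξ ∈ ℝᵐ satisfy ξ_i > 0 for all i and ξᵀA = 0, set Ξ = diag(ξ₁,…,ξ_m), and let μ < 0 be the largest eigenvalue of the symmetric matrix {ΞÃ}^s = (1/2)(ΞÃ + ÃᵀΞ). Suppose f : ℝⁿ × [0,∞) → ℝⁿ satisfies condition (11) with positive diagonal matrices P = diag(p₁,…,p_n), Δ = diag(Δ₁,…,Δ_n) and constant η > 0, and that (max_i ξ_i)·Δ_k + cμ < 0 for every k = 1,…,n. Let s : [0,∞) → ℝⁿ satisfy s'(t) = f(s(t),t), and let x₁,…,x_m : [0,∞) → ℝⁿ satisfy x₁'(t) = f(x₁(t),t) + c·Σ_{j=1}^m a_{1j} x_j(t) − cε(x₁(t) − s(t)) and x_i'(t) = f(x_i(t),t) + c·Σ_{j=1}^m a_{ij} x_j(t) for i = 2,…,m. Then for all t ≥ 0, Σ_{i=1}^m ξ_i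 (x_i(t) − s(t))ᵀ P (x_i(t) − s(t)) ≤ e^{−(2η/max_k p_k)·t} · Σ_{i=1}^m ξ_i (x_i(0) − s(0))ᵀ P (x_i(0) − s(0)); in particular every x_i converges to s exponentially. -/

import Mathlib

/-!
With `e i = x i - s`, the weighted energy `V = ∑ i, ξ i * (e i)ᵀ P (e i)` is a Lyapunov function.
Since `A` has zero row sums, `e i' = f (x i) - f s + c • ∑ j, Ã i j • e j`. Splitting
`f (x i) - f s = (f (x i) - Δ x i - f s + Δ s) + Δ e i`, condition (11) bounds the first part of
`V'` by `-2η ∑ ξ i |e i|² ≤ -(2η / max p) V`. The rest decouples over the coordinates `k`: for the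
`k`-th coordinate column `y` of the errors it is `2 p k (Δ k ∑ ξ i (y i)² + c yᵀ Ξ Ã y)`, and the
Rayleigh bound `yᵀ {ΞÃ}ˢ y ≤ μ |y|²` makes it at most `2 p k (max ξ · Δ k + c μ) |y|² ≤ 0`.
Grönwall's inequality concludes.
-/

open Matrix Real Set

namespace Matrix

variable {ι : Type*}

theorem isHermitian_half_smul_add_transpose (B : Matrix ι ι ℝ) :
    ((1 / 2 : ℝ) • (B + Bᵀ)).IsHermitian := by
  simpa [conjTranspose_eq_transpose_of_trivial] using
    (isHermitian_add_transpose_self B).smul (IsSelfAdjoint.all (1 / 2 : ℝ))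

variable [Fintype ι]

theorem dotProduct_half_smul_add_transpose_mulVec (B : Matrix ι ι ℝ) (y : ι → ℝ) :
    y ⬝ᵥ (((1 / 2 : ℝ) • (B + Bᵀ)) *ᵥ y) = y ⬝ᵥ (B *ᵥ y) := by
  rw [smul_mulVec, add_mulVec, dotProduct_smul, dotProduct_add, mulVec_transpose,
    dotProduct_comm y (y ᵥ* B), ← dotProduct_mulVec, smul_eq_mul]
  ring

theorem IsHermitian.dotProduct_mulVec_le [DecidableEq ι] {M : Matrix ι ι ℝ} (hM : M.IsHermitian)
    {μ : ℝ} (hμ : ∀ ν, Module.End.HasEigenvalue M.mulVecLin ν → ν ≤ μ) (y : ι → ℝ) :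
    y ⬝ᵥ (M *ᵥ y) ≤ μ * (y ⬝ᵥ y) := by
  have hpsd : (algebraMap ℝ _ μ - M).PosSemidef := by
    refine posSemidef_iff_isHermitian_and_spectrum_nonneg.2 ⟨?_, ?_⟩
    · rw [Algebra.algebraMap_eq_smul_one]
      exact (isHermitian_one.smul (IsSelfAdjoint.all μ)).sub hM
    · rw [← spectrum.singleton_sub_eq]
      rintro _ ⟨_, rfl, ν, hν, rfl⟩
      rw [← spectrum_toLin', ← Module.End.hasEigenvalue_iff_mem_spectrum, toLin'_apply'] at hν
      simpa using hμ ν hν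
  have := hpsd.dotProduct_mulVec_nonneg y
  simp only [star_trivial, Algebra.algebraMap_eq_smul_one, sub_mulVec, smul_mulVec, one_mulVec,
    dotProduct_sub, dotProduct_smul, smul_eq_mul, sub_nonneg] at this
  exact this

end Matrix

variable {κ : Type*} [Fintype κ]

theorem dotProduct_mul_le_mul_dotProduct {p : κ → ℝ} {pmax : ℝ} (hp : ∀ k, p k ≤ pmax)
    (v : κ → ℝ) : v ⬝ᵥ (p * v) ≤ pmax * (v ⬝ᵥ v) := by
  simp only [dotProduct, Pi.mul_apply, Finset.mul_sum]
  exact Finset.sum_le_sum fun k _ => by nlinarith [mul_self_nonneg (v k), hp k]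

theorem HasDerivAt.dotProduct_mul_self {v : ℝ → κ → ℝ} {v' : κ → ℝ} {t : ℝ}
    (h : HasDerivAt v v' t) (p : κ → ℝ) :
    HasDerivAt (fun τ => v τ ⬝ᵥ (p * v τ)) (2 * (v t ⬝ᵥ (p * v'))) t := by
  have hk (k : κ) : HasDerivAt (fun τ => v τ k) (v' k) t := hasDerivAt_pi.1 h k
  refine (HasDerivAt.fun_sum fun k _ => (hk k).mul ((hk k).const_mul (p k))).congr_deriv ?_
  simp only [dotProduct, Pi.mul_apply, Finset.mul_sum]
  exact Finset.sum_congr rfl fun k _ => by ring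

variable {ι : Type*} [Fintype ι]

def weightedEnergy (ξ : ι → ℝ) (p : κ → ℝ) (E : ι → κ → ℝ) : ℝ :=
  ∑ i, ξ i * (E i ⬝ᵥ (p * E i))

theorem hasDerivAt_weightedEnergy (ξ : ι → ℝ) (p : κ → ℝ) {E : ℝ → ι → κ → ℝ}
    {E' : ι → κ → ℝ} {t : ℝ} (h : ∀ i, HasDerivAt (fun τ => E τ i) (E' i) t) :
    HasDerivAt (fun τ => weightedEnergy ξ p (E τ))
      (∑ i, ξ i * (2 * (E t i ⬝ᵥ (p * E' i)))) t :=
  HasDerivAt.fun_sum fun i _ => ((h i).dotProduct_mul_self p).const_mul (ξ i)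

theorem sum_mul_dotProduct_coupling_nonpos [DecidableEq ι] (B : Matrix ι ι ℝ) {ξ : ι → ℝ}
    {p Δ : κ → ℝ} {c μ ξmax : ℝ} (hB : ∀ y, y ⬝ᵥ ((diagonal ξ * B) *ᵥ y) ≤ μ * (y ⬝ᵥ y))
    (hξ : ∀ i, ξ i ≤ ξmax) (hp : ∀ k, 0 ≤ p k) (hΔ : ∀ k, 0 ≤ Δ k) (hc : 0 ≤ c)
    (hΔc : ∀ k, ξmax * Δ k + c * μ ≤ 0) (E : ι → κ → ℝ) :
    ∑ i, ξ i * (E i ⬝ᵥ (p * (Δ * E i + c • ∑ j, B i j • E j))) ≤ 0 := by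
  have hcol (y : ι → ℝ) (k : κ) :
      ∑ i, ξ i * (y i * (p k * (Δ k * y i + c * (B *ᵥ y) i))) ≤ 0 := by
    have hdiag : ∑ i, ξ i * (y i * y i) ≤ ξmax * (y ⬝ᵥ y) := by
      simp only [dotProduct, Finset.mul_sum]
      exact Finset.sum_le_sum fun i _ => mul_le_mul_of_nonneg_right (hξ i) (mul_self_nonneg _)
    have hquad : y ⬝ᵥ ((diagonal ξ * B) *ᵥ y) = ∑ i, ξ i * (y i * (B *ᵥ y) i) := by
      simp only [← mulVec_mulVec, mulVec_diagonal, dotProduct]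
      exact Finset.sum_congr rfl fun i _ => by ring
    have hyy : 0 ≤ y ⬝ᵥ y := Finset.sum_nonneg fun i _ => mul_self_nonneg (y i)
    calc _ = p k * (Δ k * ∑ i, ξ i * (y i * y i) + c * (y ⬝ᵥ ((diagonal ξ * B) *ᵥ y))) := by
          simp only [hquad, Finset.mul_sum, ← Finset.sum_add_distrib]
          exact Finset.sum_congr rfl fun i _ => by ring
      _ ≤ p k * ((ξmax * Δ k + c * μ) * (y ⬝ᵥ y)) := by
          gcongr
          · exact hp k
          · nlinarith [mul_le_mul_of_nonneg_left hdiag (hΔ k), mul_le_mul_of_nonneg_left (hB y) hc]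
      _ ≤ 0 := mul_nonpos_of_nonneg_of_nonpos (hp k) (mul_nonpos_of_nonpos_of_nonneg (hΔc k) hyy)
  calc _ = ∑ k : κ, ∑ i : ι,
        ξ i * (E i k * (p k * (Δ k * E i k + c * (B *ᵥ fun i => E i k) i))) := by
        simp only [dotProduct, mulVec, Pi.mul_apply, Pi.add_apply, Pi.smul_apply, Finset.sum_apply,
          smul_eq_mul, Finset.mul_sum]
        rw [Finset.sum_comm]
    _ ≤ 0 := Finset.sum_nonpos fun k _ => hcol (fun i => E i k) k

theorem weightedEnergy_deriv_le [DecidableEq ι] (B : Matrix ι ι ℝ) {ξ : ι → ℝ}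
    {p Δ : κ → ℝ} {c μ η ξmax pmax : ℝ} (hB : ∀ y, y ⬝ᵥ ((diagonal ξ * B) *ᵥ y) ≤ μ * (y ⬝ᵥ y))
    (hξ : ∀ i, 0 ≤ ξ i) (hξmax : ∀ i, ξ i ≤ ξmax) (hp : ∀ k, 0 ≤ p k) (hpmax : ∀ k, p k ≤ pmax)
    (hpmax_pos : 0 < pmax) (hΔ : ∀ k, 0 ≤ Δ k) (hc : 0 ≤ c) (hη : 0 ≤ η)
    (hΔc : ∀ k, ξmax * Δ k + c * μ ≤ 0) (E F : ι → κ → ℝ)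
    (hF : ∀ i, E i ⬝ᵥ (p * (F i - Δ * E i)) ≤ -η * (E i ⬝ᵥ E i)) :
    ∑ i, ξ i * (2 * (E i ⬝ᵥ (p * (F i + c • ∑ j, B i j • E j))))
      ≤ -(2 * η / pmax) * weightedEnergy ξ p E := by
  have hdiss (i : ι) : ξ i * (2 * (E i ⬝ᵥ (p * (F i - Δ * E i))))
      ≤ -(2 * η / pmax) * (ξ i * (E i ⬝ᵥ (p * E i))) := by
    have : 2 * η / pmax * (E i ⬝ᵥ (p * E i)) ≤ 2 * η * (E i ⬝ᵥ E i) := by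
      calc _ ≤ 2 * η / pmax * (pmax * (E i ⬝ᵥ E i)) := by
            gcongr
            exact dotProduct_mul_le_mul_dotProduct hpmax (E i)
        _ = 2 * η * (E i ⬝ᵥ E i) := by field_simp
    nlinarith [mul_le_mul_of_nonneg_left (hF i) (hξ i), mul_le_mul_of_nonneg_left this (hξ i)]
  have hsplit (i : ι) : E i ⬝ᵥ (p * (F i + c • ∑ j, B i j • E j))
      = E i ⬝ᵥ (p * (F i - Δ * E i)) + E i ⬝ᵥ (p * (Δ * E i + c • ∑ j, B i j • E j)) := by
    rw [← dotProduct_add, ← mul_add]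
    congr 2
    abel
  have hcoupling := sum_mul_dotProduct_coupling_nonpos B hB hξmax hp hΔ hc hΔc E
  calc _ = ∑ i, ξ i * (2 * (E i ⬝ᵥ (p * (F i - Δ * E i))))
        + 2 * ∑ i, ξ i * (E i ⬝ᵥ (p * (Δ * E i + c • ∑ j, B i j • E j))) := by
        simp only [hsplit, Finset.mul_sum, ← Finset.sum_add_distrib]
        exact Finset.sum_congr rfl fun i _ => by ring
    _ ≤ ∑ i, -(2 * η / pmax) * (ξ i * (E i ⬝ᵥ (p * E i))) + 2 * 0 := by
        exact add_le_add (Finset.sum_le_sum fun i _ => hdiss i)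
          (mul_le_mul_of_nonneg_left hcoupling zero_le_two)
    _ = -(2 * η / pmax) * weightedEnergy ξ p E := by
        rw [weightedEnergy, Finset.mul_sum]
        ring

theorem le_exp_mul_of_hasDerivAt_le_mul {V V' : ℝ → ℝ} {K : ℝ}
    (hV : ∀ τ, 0 ≤ τ → HasDerivAt V (V' τ) τ) (hV' : ∀ τ, 0 ≤ τ → V' τ ≤ K * V τ)
    {t : ℝ} (ht : 0 ≤ t) : V t ≤ exp (K * t) * V 0 := by
  set g : ℝ → ℝ := fun τ => exp (-(K * τ)) * V τ
  have hg (τ : ℝ) (hτ : 0 ≤ τ) : HasDerivAt g (exp (-(K * τ)) * (V' τ - K * V τ)) τ := by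
    refine (((hasDerivAt_id τ).const_mul K).neg.exp.mul (hV τ hτ)).congr_deriv ?_
    simp only [id, mul_one, Pi.neg_apply]
    ring
  have hanti : AntitoneOn g (Ici 0) := by
    refine antitoneOn_of_hasDerivWithinAt_nonpos (f' := fun τ => exp (-(K * τ)) * (V' τ - K * V τ))
      (convex_Ici 0)
      (fun τ hτ => (hg τ hτ).continuousAt.continuousWithinAt) (fun τ hτ => ?_) (fun τ hτ => ?_)
    all_goals rw [interior_Ici] at hτ
    · exact (hg τ (hτ.le)).hasDerivWithinAt
    · exact mul_nonpos_of_nonneg_of_nonpos (exp_pos _).le (by linarith [hV' τ (hτ.le)])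
  have hgt : g t ≤ g 0 := hanti self_mem_Ici ht ht
  calc V t = exp (K * t) * g t := by simp only [g, ← mul_assoc, ← exp_add]; simp
    _ ≤ exp (K * t) * g 0 := by gcongr
    _ = exp (K * t) * V 0 := by simp [g]

section Pinning

variable {V : Type*} [NormedAddCommGroup V] [NormedSpace ℝ V] [DecidableEq ι]
  {A Atil : Matrix ι ι ℝ} {i₀ : ι} {ε : ℝ}

theorem sum_pinned_smul_sub (hrow : ∑ j, A i j = 0)
    (hAtil : ∀ j, Atil i j = if i = i₀ ∧ j = i₀ then A i j - ε else A i j) (v : ι → V) (w : V) :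
    ∑ j, Atil i j • (v j - w) = ∑ j, A i j • v j - if i = i₀ then ε • (v i₀ - w) else 0 := by
  have hA : ∑ j, A i j • (v j - w) = ∑ j, A i j • v j := by
    simp [smul_sub, Finset.sum_sub_distrib, ← Finset.sum_smul, hrow]
  have hterm (j : ι) : Atil i j • (v j - w)
      = A i j • (v j - w) - if i = i₀ ∧ j = i₀ then ε • (v j - w) else 0 := by
    rw [hAtil]
    split_ifs <;> simp [sub_smul]
  rw [Finset.sum_congr rfl fun j _ => hterm j, Finset.sum_sub_distrib, hA]
  by_cases hi : i = i₀ <;> simp [hi]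

theorem hasDerivAt_pinned_error (hrow : ∀ i, ∑ j, A i j = 0)
    (hAtil : ∀ i j, Atil i j = if i = i₀ ∧ j = i₀ then A i j - ε else A i j)
    {f : V → ℝ → V} {c t : ℝ} {s : ℝ → V} {x : ι → ℝ → V}
    (hs : HasDerivAt s (f (s t) t) t)
    (hx₀ : HasDerivAt (x i₀)
      (f (x i₀ t) t + c • (∑ j, A i₀ j • x j t) - (c * ε) • (x i₀ t - s t)) t)
    (hx : ∀ i, i ≠ i₀ → HasDerivAt (x i) (f (x i t) t + c • ∑ j, A i j • x j t) t) (i : ι) :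
    HasDerivAt (fun τ => x i τ - s τ)
      (f (x i t) t - f (s t) t + c • ∑ j, Atil i j • (x j t - s t)) t := by
  rw [sum_pinned_smul_sub (hrow i) (hAtil i)]
  by_cases hi : i = i₀
  · subst hi
    refine (hx₀.sub hs).congr_deriv ?_
    simp only [if_true, smul_sub, mul_smul]
    abel
  · refine ((hx i hi).sub hs).congr_deriv ?_
    simp only [hi, if_false, sub_zero]
    abel

end Pinning

/-- Theorem 3: global exponential pinning of a linearly coupled network with an
irreducible (possibly asymmetric) coupling matrix via a single controller. -/
theorem stmt_6 (m n : ℕ) (hm : 2 ≤ m)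
    (A : Matrix (Fin m) (Fin m) ℝ)
    (hrow : ∀ i : Fin m, ∑ j, A i j = 0)
    (ε c : ℝ) (hc : 0 < c)
    (Atil : Matrix (Fin m) (Fin m) ℝ)
    (hAtil : ∀ i j : Fin m, Atil i j =
      if i = (⟨0, by omega⟩ : Fin m) ∧ j = (⟨0, by omega⟩ : Fin m) then A i j - ε else A i j)
    (ξ : Fin m → ℝ) (hξ : ∀ i, 0 < ξ i)
    (μ : ℝ)
    (hμmax : ∀ ν : ℝ, Module.End.HasEigenvalue (Matrix.mulVecLin
      ((1 / 2 : ℝ) • (Matrix.diagonal ξ * Atil + Atilᵀ * Matrix.diagonal ξ))) ν → ν ≤ μ)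
    (p Δ : Fin n → ℝ) (hp : ∀ k, 0 < p k) (hΔ : ∀ k, 0 < Δ k)
    (η : ℝ) (hη : 0 < η)
    (f : (Fin n → ℝ) → ℝ → (Fin n → ℝ))
    (hcond : ∀ t : ℝ, 0 ≤ t → ∀ x y : Fin n → ℝ,
      (x - y) ⬝ᵥ (fun k => p k * (f x t k - Δ k * x k - f y t k + Δ k * y k))
        ≤ -η * ((x - y) ⬝ᵥ (x - y)))
    (ξmax : ℝ) (hξmax : IsGreatest (Set.range ξ) ξmax)
    (hΔc : ∀ k : Fin n, ξmax * Δ k + c * μ < 0)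
    (s : ℝ → Fin n → ℝ) (hs : ∀ t : ℝ, 0 ≤ t → HasDerivAt s (f (s t) t) t)
    (x : Fin m → ℝ → Fin n → ℝ)
    (hx1 : ∀ t : ℝ, 0 ≤ t → HasDerivAt (x ⟨0, by omega⟩)
      (f (x ⟨0, by omega⟩ t) t + c • (∑ j, A ⟨0, by omega⟩ j • x j t)
        - (c * ε) • (x ⟨0, by omega⟩ t - s t)) t)
    (hxi : ∀ i : Fin m, i ≠ (⟨0, by omega⟩ : Fin m) → ∀ t : ℝ, 0 ≤ t →
      HasDerivAt (x i) (f (x i t) t + c • (∑ j, A i j • x j t)) t)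
    (pmax : ℝ) (hpmax : IsGreatest (Set.range p) pmax)
    (t : ℝ) (ht : 0 ≤ t) :
    ∑ i : Fin m, ξ i * ((x i t - s t) ⬝ᵥ (fun k => p k * (x i t - s t) k))
      ≤ Real.exp (-(2 * η / pmax) * t) *
        ∑ i : Fin m, ξ i * ((x i 0 - s 0) ⬝ᵥ (fun k => p k * (x i 0 - s 0) k)) := by
  obtain ⟨k₀, hk₀⟩ := hpmax.1
  have hB (y : Fin m → ℝ) : y ⬝ᵥ ((diagonal ξ * Atil) *ᵥ y) ≤ μ * (y ⬝ᵥ y) := by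
    rw [← dotProduct_half_smul_add_transpose_mulVec]
    refine (isHermitian_half_smul_add_transpose _).dotProduct_mulVec_le (fun ν hν => hμmax ν ?_) y
    simpa only [transpose_mul, diagonal_transpose] using hν
  have hdiss (τ : ℝ) (hτ : 0 ≤ τ) (i : Fin m) :
      (x i τ - s τ) ⬝ᵥ (p * ((f (x i τ) τ - f (s τ) τ) - Δ * (x i τ - s τ)))
        ≤ -η * ((x i τ - s τ) ⬝ᵥ (x i τ - s τ)) := by
    convert hcond τ hτ (x i τ) (s τ) using 3 with k
    simp only [Pi.mul_apply, Pi.sub_apply]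
    ring
  refine le_exp_mul_of_hasDerivAt_le_mul (V := fun τ => weightedEnergy ξ p fun i => x i τ - s τ)
    (fun τ hτ => hasDerivAt_weightedEnergy ξ p fun i =>
      hasDerivAt_pinned_error hrow hAtil (hs τ hτ) (hx1 τ hτ) (fun i hi => hxi i hi τ hτ) i)
    (fun τ hτ => weightedEnergy_deriv_le Atil hB (fun i => (hξ i).le)
      (fun i => hξmax.2 ⟨i, rfl⟩) (fun k => (hp k).le) (fun k => hpmax.2 ⟨k, rfl⟩)
      (hk₀ ▸ hp k₀) (fun k => (hΔ k).le) hc.le hη.le (fun k => (hΔc k).le) _ _ (hdiss τ hτ)) ht
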